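/- arXiv:1112.0348 — 6 statements merged into one kernel-verified Lean document; each statement's English description precedes it below -/
import Mathlib

section
/- For any vector α ∈ V there exist a vector β ∈ W^N and a positive real scalar q such that α = q β, where W = {0} ∪ {∏_{j=1}^{N-1} m_j : m_j ∈ {1,...,M}}. -/
/-- α belongs to V: α is nonnegative and for every nonempty proper subset U of
indices, with α not identically zero on U nor on Uᶜ, there exist i ∈ U, j ∈ Uᶜ
and nonzero m, n ∈ {1,...,M} with α i ≠ 0, α j ≠ 0 and α i * m = α j * n. -/
def memV (N M : ℕ) (α : Fin N → ℝ) : Prop :=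
  (∀ n, 0 ≤ α n) ∧
  ∀ U : Finset (Fin N), U ≠ ∅ → U ≠ Finset.univ →
    (∃ i ∈ U, α i ≠ 0) → (∃ j ∈ Uᶜ, α j ≠ 0) →
    ∃ i ∈ U, ∃ j ∈ Uᶜ, ∃ m n : ℕ, 1 ≤ m ∧ m ≤ M ∧ 1 ≤ n ∧ n ≤ M ∧
      α i ≠ 0 ∧ α j ≠ 0 ∧ α i * (m : ℝ) = α j * (n : ℝ)

/-- W = {0} ∪ {∏_{j=1}^{N-1} m_j : m_j ∈ {1,...,M}}. -/
def Wset (N M : ℕ) : Set ℕ :=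
  {z | z = 0 ∨ ∃ f : Fin (N - 1) → ℕ, (∀ j, 1 ≤ f j ∧ f j ≤ M) ∧ z = ∏ j, f j}

private lemma prod_update_one {k : ℕ} (F : Fin k → ℕ) (j₀ : Fin k) (hF : F j₀ = 1) (v : ℕ) :
    ∏ j, Function.update F j₀ v j = v * ∏ j, F j := by
  rw [Finset.prod_update_of_mem (Finset.mem_univ _), Finset.sdiff_singleton_eq_erase]
  rw [← Finset.mul_prod_erase Finset.univ F (Finset.mem_univ j₀), hF, one_mul]

/-- Every α ∈ V equals q·β for some β ∈ W^N and positive scalar q. -/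
theorem stmt_1 (N M : ℕ) (hN : 1 ≤ N) (hM : 1 ≤ M) (α : Fin N → ℝ)
    (hα : memV N M α) :
    ∃ (β : Fin N → ℕ) (q : ℝ), (∀ n, β n ∈ Wset N M) ∧ 0 < q ∧
      ∀ n, α n = q * (β n : ℝ) := by
  classical
  by_cases h0 : ∀ n, α n = 0
  · exact ⟨fun _ => 0, 1, fun n => Or.inl rfl, one_pos, fun n => by simp [h0 n]⟩
  push_neg at h0
  obtain ⟨i0, hi0⟩ := h0
  set supp : Finset (Fin N) := Finset.univ.filter (fun i => α i ≠ 0) with hsupp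
  have hmemsupp : ∀ i, i ∈ supp ↔ α i ≠ 0 := by
    intro i; simp [hsupp]
  -- The goal of the induction:
  set Goal : Prop := ∃ c : ℝ, 0 < c ∧ ∃ F : Fin N → Fin (N - 1) → ℕ,
      ∀ i ∈ supp, (∀ j, 1 ≤ F i j ∧ F i j ≤ M) ∧ α i = c * ((∏ j, F i j : ℕ) : ℝ)
    with hGoal
  have key : ∀ k (s : Finset (Fin N)), (supp \ s).card ≤ k → s.Nonempty → s ⊆ supp →
      (∃ c : ℝ, 0 < c ∧ ∃ F : Fin N → Fin (N - 1) → ℕ,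
        ∀ i ∈ s, (∀ j, 1 ≤ F i j ∧ F i j ≤ M) ∧
          (∀ j : Fin (N - 1), s.card - 1 ≤ (j : ℕ) → F i j = 1) ∧
          α i = c * ((∏ j, F i j : ℕ) : ℝ)) → Goal := by
    intro k
    induction k with
    | zero =>
      intro s hcard hne hsub hinv
      have hss : supp ⊆ s := by
        intro x hx
        by_contra hxs
        have : x ∈ supp \ s := Finset.mem_sdiff.mpr ⟨hx, hxs⟩
        have := Finset.card_pos.mpr ⟨x, this⟩
        omega
      obtain ⟨c, hc, F, hF⟩ := hinv
      exact ⟨c, hc, F, fun i hi => ⟨(hF i (hss hi)).1, (hF i (hss hi)).2.2⟩⟩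
    | succ k ih =>
      intro s hcard hne hsub hinv
      by_cases hss : supp ⊆ s
      · obtain ⟨c, hc, F, hF⟩ := hinv
        exact ⟨c, hc, F, fun i hi => ⟨(hF i (hss hi)).1, (hF i (hss hi)).2.2⟩⟩
      obtain ⟨j1, hj1supp, hj1s⟩ := Finset.not_subset.mp hss
      obtain ⟨c, hc, F, hF⟩ := hinv
      have hsne : s ≠ ∅ := hne.ne_empty
      have hsnu : s ≠ Finset.univ := by
        intro h; exact hj1s (h ▸ Finset.mem_univ j1)
      obtain ⟨i1, hi1s⟩ := hne
      have hi1 : α i1 ≠ 0 := (hmemsupp i1).mp (hsub hi1s)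
      have hj1 : α j1 ≠ 0 := (hmemsupp j1).mp hj1supp
      obtain ⟨i, his, j, hjc, m, n, hm1, hmM, hn1, hnM, hai, haj, heq⟩ :=
        hα.2 s hsne hsnu ⟨i1, hi1s, hi1⟩ ⟨j1, Finset.mem_compl.mpr hj1s, hj1⟩
      have hjs : j ∉ s := Finset.mem_compl.mp hjc
      have hs1 : 1 ≤ s.card := Finset.card_pos.mpr ⟨i1, hi1s⟩
      have hcardN : s.card < N := by
        have := Finset.card_lt_card (Finset.ssubset_univ_iff.mpr hsnu)
        simpa using this
      have hj0lt : s.card - 1 < N - 1 := by omega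
      set j₀ : Fin (N - 1) := ⟨s.card - 1, hj0lt⟩ with hj₀
      set s' := insert j s with hs'
      have hcard' : s'.card = s.card + 1 := Finset.card_insert_of_notMem hjs
      have hnR : (n : ℝ) ≠ 0 := by positivity
      have hc' : 0 < c / n := by positivity
      set F' : Fin N → Fin (N - 1) → ℕ := fun x =>
        if x = j then Function.update (F i) j₀ m else Function.update (F x) j₀ n with hF'
      have hstep : ∀ x ∈ s', (∀ jj, 1 ≤ F' x jj ∧ F' x jj ≤ M) ∧
          (∀ jj : Fin (N - 1), s'.card - 1 ≤ (jj : ℕ) → F' x jj = 1) ∧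
          α x = (c / n) * ((∏ jj, F' x jj : ℕ) : ℝ) := by
        intro x hx
        rcases Finset.mem_insert.mp hx with hxj | hxs
        · subst hxj
          obtain ⟨hFb, hFone, hFeq⟩ := hF i his
          have hFij₀ : F i j₀ = 1 := hFone j₀ (le_refl _)
          have hxne : F' x = Function.update (F i) j₀ m := by
            simp [hF']
          refine ⟨?_, ?_, ?_⟩
          · intro jj
            rw [hxne]
            by_cases h : jj = j₀
            · subst h; simp [Function.update_self]; omega
            · rw [Function.update_of_ne h]; exact hFb jj
          · intro jj hjj
            rw [hxne]
            have hne' : jj ≠ j₀ := by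
              intro h; subst h; simp [hj₀] at hjj; omega
            rw [Function.update_of_ne hne']
            exact hFone jj (by omega)
          · rw [hxne, prod_update_one (F i) j₀ hFij₀ m]
            have hαx : α x = α i * m / n := by
              field_simp
              linarith [heq]
            rw [hαx, hFeq]
            push_cast
            field_simp
        · obtain ⟨hFb, hFone, hFeq⟩ := hF x hxs
          have hFxj₀ : F x j₀ = 1 := hFone j₀ (le_refl _)
          have hxne : F' x = Function.update (F x) j₀ n := by
            have : x ≠ j := fun h => hjs (h ▸ hxs)
            simp [hF', this]
          refine ⟨?_, ?_, ?_⟩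
          · intro jj
            rw [hxne]
            by_cases h : jj = j₀
            · subst h; simp [Function.update_self]; omega
            · rw [Function.update_of_ne h]; exact hFb jj
          · intro jj hjj
            rw [hxne]
            have hne' : jj ≠ j₀ := by
              intro h; subst h; simp [hj₀] at hjj; omega
            rw [Function.update_of_ne hne']
            exact hFone jj (by omega)
          · rw [hxne, prod_update_one (F x) j₀ hFxj₀ n]
            rw [hFeq]
            push_cast
            field_simp
      have hjsupp : j ∈ supp := (hmemsupp j).mpr haj
      have hsub' : s' ⊆ supp := by
        intro x hx
        rcases Finset.mem_insert.mp hx with h | h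
        · exact h ▸ hjsupp
        · exact hsub h
      have hcard'' : (supp \ s').card ≤ k := by
        have h1 : supp \ s' ⊂ supp \ s := by
          refine Finset.ssubset_iff_of_subset (Finset.sdiff_subset_sdiff le_rfl (Finset.subset_insert _ _)) |>.mpr ?_
          exact ⟨j, Finset.mem_sdiff.mpr ⟨hjsupp, hjs⟩, by simp [hs']⟩
        have := Finset.card_lt_card h1
        omega
      exact ih s' hcard'' ⟨j, Finset.mem_insert_self _ _⟩ hsub' ⟨c / n, hc', F', hstep⟩
  -- base case application
  have hi0supp : i0 ∈ supp := (hmemsupp i0).mpr hi0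
  have hbase : ∃ c : ℝ, 0 < c ∧ ∃ F : Fin N → Fin (N - 1) → ℕ,
      ∀ i ∈ ({i0} : Finset (Fin N)), (∀ j, 1 ≤ F i j ∧ F i j ≤ M) ∧
        (∀ j : Fin (N - 1), ({i0} : Finset (Fin N)).card - 1 ≤ (j : ℕ) → F i j = 1) ∧
        α i = c * ((∏ j, F i j : ℕ) : ℝ) := by
    refine ⟨α i0, ?_, fun _ _ => 1, ?_⟩
    · have := hα.1 i0
      exact lt_of_le_of_ne this (Ne.symm hi0)
    · intro i hi
      have : i = i0 := Finset.mem_singleton.mp hi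
      subst this
      refine ⟨fun j => ⟨le_refl _, hM⟩, fun j _ => rfl, ?_⟩
      simp
  have hgoal : Goal := key ((supp \ {i0}).card) {i0} le_rfl ⟨i0, Finset.mem_singleton_self i0⟩
    (Finset.singleton_subset_iff.mpr hi0supp) hbase
  rw [hGoal] at hgoal
  obtain ⟨c, hc, F, hF⟩ := hgoal
  refine ⟨fun i => if α i = 0 then 0 else ∏ j, F i j, c, ?_, hc, ?_⟩
  · intro i
    by_cases h : α i = 0
    · simp [h, Wset]
    · have hi : i ∈ supp := (hmemsupp i).mpr h
      simp only [h, if_neg]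
      right
      exact ⟨F i, (hF i hi).1, by simp [h]⟩
  · intro i
    by_cases h : α i = 0
    · simp [h]
    · have hi : i ∈ supp := (hmemsupp i).mpr h
      simpa [h] using (hF i hi).2
end

section
/- If a nonnegative discrete-time queue process X(t) is strongly stable and E[μ(t) − A(t)] ≤ D for all t for some finite constant D ≥ 0, then lim_{t→∞} (1/t) E[X(t)] = 0. -/
open MeasureTheory Filter Finset

/-- If a single discrete-time queue X(t) = (X(t−1) − μ(t))⁺ + A(t) is strongly
stable and E[μ(t) − A(t)] ≤ D for all t, then (1/t)·E[X(t)] → 0. -/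
theorem stmt_5 {Ω : Type*} [MeasureSpace Ω] [IsProbabilityMeasure (volume : Measure Ω)]
    (X A μs : ℕ → Ω → ℝ)
    (hA : ∀ t ω, 0 ≤ A t ω) (hμ : ∀ t ω, 0 ≤ μs t ω) (hX0 : ∀ ω, 0 ≤ X 0 ω)
    (hevol : ∀ t : ℕ, 1 ≤ t → ∀ ω, X t ω = max (X (t - 1) ω - μs t ω) 0 + A t ω)
    (hintX : ∀ t, Integrable (X t) volume)
    (hintA : ∀ t, Integrable (A t) volume)
    (hintμ : ∀ t, Integrable (μs t) volume)
    (D : ℝ) (hD : 0 ≤ D)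
    (hdiff : ∀ t, ∫ ω, (μs t ω - A t ω) ∂volume ≤ D)
    (hstable : ∃ C : ℝ, ∀ t : ℕ, 1 ≤ t →
      (1 / (t : ℝ)) * ∑ τ ∈ range t, ∫ ω, X τ ω ∂volume ≤ C) :
    Tendsto (fun t : ℕ => (1 / (t : ℝ)) * ∫ ω, X t ω ∂volume) atTop (nhds 0) := by
  obtain ⟨C, hC⟩ := hstable
  set a : ℕ → ℝ := fun t => ∫ ω, X t ω ∂volume with ha
  -- nonnegativity of X
  have hXnn : ∀ t ω, 0 ≤ X t ω := by
    intro t ω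
    cases t with
    | zero => exact hX0 ω
    | succ n =>
      rw [hevol (n+1) (by omega) ω]
      exact add_nonneg (le_max_right _ _) (hA _ _)
  have ha0 : ∀ t, 0 ≤ a t := fun t => integral_nonneg (fun ω => hXnn t ω)
  -- one-step drift bound
  have hstep : ∀ t, a t ≤ a (t+1) + D := by
    intro t
    have h1 : ∀ ω, X t ω - (μs (t+1) ω - A (t+1) ω) ≤ X (t+1) ω := by
      intro ω
      rw [hevol (t+1) (by omega) ω]
      simp only [Nat.add_sub_cancel]
      have := le_max_left (X t ω - μs (t+1) ω) (0:ℝ)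
      linarith
    have h2 := integral_mono ((hintX t).sub ((hintμ (t+1)).sub (hintA (t+1))))
      (hintX (t+1)) h1
    simp only [Pi.sub_apply] at h2
    have h2' := integral_sub (hintX t) ((hintμ (t+1)).sub (hintA (t+1)))
    simp only [Pi.sub_apply] at h2'
    rw [h2'] at h2
    have h3 := hdiff (t+1)
    simp only [ha]
    linarith
  -- chain bound
  have hchain : ∀ t j : ℕ, a t ≤ a (t+j) + (j : ℝ) * D := by
    intro t j
    induction j with
    | zero => simp
    | succ n ih =>
      have h := hstep (t+n)
      push_cast
      have he : t + (n+1) = t + n + 1 := by omega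
      rw [he]
      linarith
  -- stability: sums bounded
  have hsum : ∀ n : ℕ, 1 ≤ n → ∑ τ ∈ range n, a τ ≤ C * n := by
    intro n hn
    have hnpos : (0:ℝ) < n := by exact_mod_cast hn
    have := hC n hn
    rw [one_div, inv_mul_le_iff₀ hnpos] at this
    linarith [this]
  -- main inequality
  have main : ∀ K t : ℕ, 1 ≤ K → 1 ≤ t →
      (1 / (t:ℝ)) * a t ≤ C / K + (C + (K:ℝ)*D) / t := by
    intro K t hK ht
    have hKpos : (0:ℝ) < K := by exact_mod_cast hK
    have htpos : (0:ℝ) < t := by exact_mod_cast ht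
    have hwin : (K:ℝ) * a t ≤ (∑ j ∈ range K, a (t+j)) + (K:ℝ) * ((K:ℝ) * D) := by
      have h1 : ∀ j ∈ range K, a t ≤ a (t+j) + (K:ℝ)*D := by
        intro j hj
        have hjK : (j:ℝ) ≤ K := by exact_mod_cast (mem_range.mp hj).le
        have := hchain t j
        nlinarith
      have h2 := Finset.sum_le_sum h1
      simp only [Finset.sum_const, Finset.card_range, nsmul_eq_mul, Finset.sum_add_distrib] at h2
      linarith
    have hsplit : ∑ τ ∈ range (t+K), a τ = (∑ τ ∈ range t, a τ) + ∑ j ∈ range K, a (t+j) := by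
      rw [Finset.sum_range_add]
    have hnn : 0 ≤ ∑ τ ∈ range t, a τ := Finset.sum_nonneg (fun i _ => ha0 i)
    have hS := hsum (t+K) (by omega)
    have key : (K:ℝ) * a t ≤ C * ((t:ℝ) + K) + (K:ℝ) * ((K:ℝ) * D) := by
      have : (∑ j ∈ range K, a (t+j)) ≤ C * ((t:ℝ) + K) := by
        have : ((t+K : ℕ) : ℝ) = (t:ℝ) + K := by push_cast; ring
        rw [hsplit] at hS
        linarith [hS, hnn, this ▸ hS]
      linarith
    rw [one_div, inv_mul_eq_div, div_add_div _ _ (ne_of_gt hKpos) (ne_of_gt htpos),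
      div_le_div_iff₀ htpos (mul_pos hKpos htpos)]
    nlinarith [mul_le_mul_of_nonneg_left key htpos.le]
  -- C is nonnegative
  have hCnn : 0 ≤ C := by
    have := hC 1 le_rfl
    simp [Finset.sum_range_one] at this
    linarith [ha0 0, this]
  -- conclude via ε argument
  rw [Metric.tendsto_atTop]
  intro ε hε
  set K : ℕ := ⌈3*C/ε⌉₊ + 1 with hKdef
  have hK1 : 1 ≤ K := by omega
  have hKpos : (0:ℝ) < K := by exact_mod_cast hK1
  have hCK : C / K < ε / 3 := by
    have h1 : 3*C/ε < K := by
      calc 3*C/ε ≤ ⌈3*C/ε⌉₊ := Nat.le_ceil _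
        _ < K := by exact_mod_cast Nat.lt_succ_self _
    rw [div_lt_iff₀ hKpos]
    rw [div_lt_iff₀ hε] at h1
    nlinarith
  have htail : Tendsto (fun t : ℕ => (C + (K:ℝ)*D) / t) atTop (nhds 0) :=
    tendsto_const_div_atTop_nhds_zero_nat _
  have h2 := (htail.eventually (gt_mem_nhds (show (0:ℝ) < ε/3 by linarith))).and
    (eventually_ge_atTop 1)
  rw [eventually_atTop] at h2
  obtain ⟨N, hN⟩ := h2
  refine ⟨N, fun t ht => ?_⟩
  obtain ⟨h3, h4⟩ := hN t ht
  have hmain := main K t hK1 h4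
  have htpos : (0:ℝ) < t := by exact_mod_cast h4
  have hnn : 0 ≤ (1 / (t:ℝ)) * a t := mul_nonneg (by positivity) (ha0 t)
  rw [Real.dist_eq, sub_zero, abs_of_nonneg hnn]
  calc (1 / (t:ℝ)) * a t ≤ C / K + (C + (K:ℝ)*D) / t := hmain
    _ < ε/3 + ε/3 := by exact add_lt_add hCK h3
    _ < ε := by linarith
end

section
/- Necessary stability condition: if the MQMS system is strongly stable under some server allocation policy, then for every α ∈ ℝ₊^N, limsup_{t→∞}(1/t)∑_{τ=1}^t α·E[A(τ)]ᵀ ≤ ∑_{s∈S} π_s · max_{I∈𝓘} α·(C_s ⊛ I)·1_Kᵀ. -/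
set_option maxHeartbeats 2000000


open MeasureTheory Filter Finset

/-- The set 𝓘 of N×K binary allocation matrices with at most one 1 per column. -/
def allocSet (N K : ℕ) : Set (Matrix (Fin N) (Fin K) ℝ) :=
  {I | (∀ n k, I n k = 0 ∨ I n k = 1) ∧ ∀ k, (∑ n, I n k) ≤ 1}

/-- α·(C ⊛ I)·1_Kᵀ : the α-weighted service rate of allocation I in channel state C. -/
def weightedRate {N K : ℕ} (α : Fin N → ℝ) (C I : Matrix (Fin N) (Fin K) ℝ) : ℝ :=
  ∑ k, ∑ n, α n * (C n k * I n k)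

/-- max_{I ∈ 𝓘} α·(C ⊛ I)·1_Kᵀ. -/
noncomputable def serviceMax {N K : ℕ} (α : Fin N → ℝ)
    (C : Matrix (Fin N) (Fin K) ℝ) : ℝ :=
  sSup {x | ∃ I ∈ allocSet N K, x = weightedRate α C I}

lemma zero_mem_allocSet (N K : ℕ) : (0 : Matrix (Fin N) (Fin K) ℝ) ∈ allocSet N K := by
  constructor
  · intro n k; left; rfl
  · intro k; simp

lemma bddAbove_rates {N K : ℕ} (α : Fin N → ℝ) (C : Matrix (Fin N) (Fin K) ℝ) :
    BddAbove {x | ∃ I ∈ allocSet N K, x = weightedRate α C I} := by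
  refine ⟨∑ k, ∑ n, |α n * C n k|, ?_⟩
  rintro x ⟨I, hI, rfl⟩
  refine Finset.sum_le_sum fun k _ => Finset.sum_le_sum fun n _ => ?_
  rcases hI.1 n k with h | h
  · rw [h]; simp [abs_nonneg]; positivity
  · simp only [h, mul_one]; exact le_abs_self _

lemma serviceMax_nonneg {N K : ℕ} (α : Fin N → ℝ) (C : Matrix (Fin N) (Fin K) ℝ) :
    0 ≤ serviceMax α C := by
  have h0 : (0 : ℝ) ∈ {x | ∃ I ∈ allocSet N K, x = weightedRate α C I} :=
    ⟨0, zero_mem_allocSet N K, by simp [weightedRate]⟩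
  exact le_csSup (bddAbove_rates α C) h0

lemma le_serviceMax {N K : ℕ} (α : Fin N → ℝ) (C I : Matrix (Fin N) (Fin K) ℝ)
    (hI : I ∈ allocSet N K) : weightedRate α C I ≤ serviceMax α C :=
  le_csSup (bddAbove_rates α C) ⟨I, hI, rfl⟩


lemma partition_integral_le {Ω : Type*} [MeasureSpace Ω] [IsProbabilityMeasure (volume : Measure Ω)]
    {S : Type*} [Fintype S] (φ : Ω → S) (π : S → ℝ) (hπ : ∀ s, 0 ≤ π s)
    (hπ1 : ∑ s, π s = 1)
    (hmeas : ∀ s, volume {ω | φ ω = s} = ENNReal.ofReal (π s))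
    (g : S → ℝ)
    (F : Ω → ℝ) (hF : Integrable F volume) (hFg : ∀ ω, F ω ≤ g (φ ω)) :
    ∫ ω, F ω ≤ ∑ s, π s * g s := by
  classical
  set μ := (volume : Measure Ω) with hμ
  set T : S → Set Ω := fun s => toMeasurable μ {ω | φ ω = s} with hT
  have hTmeas : ∀ s, MeasurableSet (T s) := fun s => measurableSet_toMeasurable _ _
  have hTμ : ∀ s, μ (T s) = ENNReal.ofReal (π s) := fun s =>
    (measure_toMeasurable _).trans (hmeas s)
  have hsub : ∀ s, {ω | φ ω = s} ⊆ T s := fun s => subset_toMeasurable _ _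
  have hsum : ∑ s, μ (T s) = 1 := by
    simp only [hTμ]
    rw [← ENNReal.ofReal_sum_of_nonneg (fun s _ => hπ s), hπ1, ENNReal.ofReal_one]
  have hcover : μ (⋃ s, T s) = 1 := by
    have : (⋃ s, T s) = Set.univ := by
      apply Set.eq_univ_of_forall
      intro ω
      exact Set.mem_iUnion.2 ⟨φ ω, hsub (φ ω) rfl⟩
    rw [this, measure_univ]
  have hoverlap : ∀ s s' : S, s ≠ s' → μ (T s' ∩ T s) = 0 := by
    intro s s' hne
    have hsub2 : (⋃ r, T r) ⊆ (T s' \ T s) ∪ ⋃ r ∈ Finset.univ.erase s', T r := by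
      intro ω hω
      rcases Set.mem_iUnion.1 hω with ⟨r, hr⟩
      by_cases hr' : r = s'
      · subst hr'
        by_cases hs : ω ∈ T s
        · exact Or.inr (Set.mem_biUnion (Finset.mem_erase.2 ⟨hne, Finset.mem_univ s⟩) hs)
        · exact Or.inl ⟨hr, hs⟩
      · exact Or.inr (Set.mem_biUnion (Finset.mem_erase.2 ⟨hr', Finset.mem_univ r⟩) hr)
    have h1 : (1 : ENNReal) ≤ μ (T s' \ T s) + ∑ r ∈ Finset.univ.erase s', μ (T r) := by
      calc (1 : ENNReal) = μ (⋃ r, T r) := hcover.symm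
        _ ≤ μ ((T s' \ T s) ∪ ⋃ r ∈ Finset.univ.erase s', T r) := measure_mono hsub2
        _ ≤ μ (T s' \ T s) + μ (⋃ r ∈ Finset.univ.erase s', T r) := measure_union_le _ _
        _ ≤ μ (T s' \ T s) + ∑ r ∈ Finset.univ.erase s', μ (T r) := by
            gcongr
            exact measure_biUnion_finset_le _ _
    have h2 : μ (T s') + ∑ r ∈ Finset.univ.erase s', μ (T r) = 1 := by
      rw [← hsum]
      exact Finset.add_sum_erase Finset.univ (fun r => μ (T r)) (Finset.mem_univ s')
    have hSfin : ∑ r ∈ Finset.univ.erase s', μ (T r) ≠ ⊤ := by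
      intro h
      rw [h] at h2
      simp at h2
    have h3 : μ (T s') ≤ μ (T s' \ T s) := by
      rw [← h2] at h1
      exact (ENNReal.add_le_add_iff_right hSfin).1 h1
    have h4 : μ (T s' ∩ T s) + μ (T s' \ T s) = μ (T s') :=
      measure_inter_add_diff _ (hTmeas s)
    have hdfin : μ (T s' \ T s) ≠ ⊤ := measure_ne_top μ _
    have h5 : μ (T s' ∩ T s) + μ (T s' \ T s) ≤ 0 + μ (T s' \ T s) := by
      rw [zero_add, h4]; exact h3
    have := (ENNReal.add_le_add_iff_right hdfin).1 h5
    exact le_antisymm this (zero_le)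
  -- bad set
  set Bad : Set Ω := ⋃ (p : S × S) (_ : p.1 ≠ p.2), T p.1 ∩ T p.2 with hBad
  have hBadnull : μ Bad = 0 := by
    refine measure_iUnion_null fun p => measure_iUnion_null fun h => ?_
    exact hoverlap p.2 p.1 h.symm
  set G : Ω → ℝ := fun ω => ∑ s, Set.indicator (T s) (fun _ => g s) ω with hG
  have hGint : Integrable G μ :=
    integrable_finset_sum _ fun s _ => (integrable_const (g s)).indicator (hTmeas s)
  have hae : ∀ᵐ ω ∂μ, F ω ≤ G ω := by
    rw [ae_iff]
    refine measure_mono_null ?_ hBadnull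
    intro ω hω
    simp only [Set.mem_setOf_eq, not_le] at hω
    by_contra hωB
    apply absurd hω
    push_neg
    have hGω : G ω = g (φ ω) := by
      simp only [hG]
      rw [Finset.sum_eq_single (φ ω)]
      · rw [Set.indicator_of_mem (hsub (φ ω) rfl)]
      · intro s _ hs
        have hωs : ω ∉ T s := by
          intro hmem
          exact hωB (Set.mem_iUnion.2 ⟨(s, φ ω), Set.mem_iUnion.2
            ⟨hs, ⟨hmem, hsub (φ ω) rfl⟩⟩⟩)
        exact Set.indicator_of_notMem hωs _
      · intro h
        exact absurd (Finset.mem_univ (φ ω)) h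
    rw [hGω]
    exact hFg ω
  have hle : ∫ ω, F ω ∂μ ≤ ∫ ω, G ω ∂μ := integral_mono_ae hF hGint hae
  have hGval : ∫ ω, G ω ∂μ = ∑ s, π s * g s := by
    rw [hG, integral_finset_sum _ fun s _ => (integrable_const (g s)).indicator (hTmeas s)]
    refine Finset.sum_congr rfl fun s _ => ?_
    rw [integral_indicator_const _ (hTmeas s), measureReal_def, hTμ s, ENNReal.toReal_ofReal (hπ s),
      smul_eq_mul]
  rw [← hGval]
  exact hle


lemma seq_limsup_le (f a b : ℕ → ℝ) (R Cf : ℝ) (hR : 0 ≤ R)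
    (hf0 : ∀ t, 0 ≤ f t) (ha : ∀ t, 0 ≤ a t) (hb0 : ∀ t, 0 ≤ b t) (hbR : ∀ t, b t ≤ R)
    (hrec : ∀ τ : ℕ, a (τ + 1) = f (τ + 1) - f τ + b (τ + 1))
    (havg : ∀ t : ℕ, 1 ≤ t → (1 / (t : ℝ)) * ∑ τ ∈ range t, f τ ≤ Cf) :
    limsup (fun t : ℕ => (1 / (t : ℝ)) * ∑ τ ∈ Icc 1 t, a τ) atTop ≤ R := by
  set u : ℕ → ℝ := fun t => (1 / (t : ℝ)) * ∑ τ ∈ Icc 1 t, a τ with hu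
  have hupos : ∀ t, 0 ≤ u t := fun t => by
    apply mul_nonneg (by positivity)
    exact Finset.sum_nonneg fun τ _ => ha τ
  set R' : ℝ := max R 1 with hR'
  have hR'1 : (1 : ℝ) ≤ R' := le_max_right _ _
  have hR'0 : (0 : ℝ) < R' := lt_of_lt_of_le one_pos hR'1
  have hRR' : R ≤ R' := le_max_left _ _
  set Cp : ℝ := max Cf 0 with hCp
  have hCp0 : 0 ≤ Cp := le_max_right _ _
  have hCfCp : Cf ≤ Cp := le_max_left _ _
  have htel : ∀ t : ℕ, ∑ τ ∈ Icc 1 t, a τ = f t - f 0 + ∑ τ ∈ Icc 1 t, b τ := by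
    intro t
    induction t with
    | zero => simp
    | succ t ih =>
      rw [Finset.sum_Icc_succ_top (Nat.succ_le_succ (Nat.zero_le t)),
        Finset.sum_Icc_succ_top (Nat.succ_le_succ (Nat.zero_le t)), ih, hrec t]
      ring
  have hdec : ∀ t j : ℕ, f t - (j : ℝ) * R' ≤ f (t + j) := by
    intro t j
    induction j with
    | zero => simp
    | succ j ih =>
      have h1 := hrec (t + j)
      have h2 := ha (t + j + 1)
      have h3 := hbR (t + j + 1)
      have h4 : f (t + j) - R' ≤ f (t + j + 1) := by linarith
      have h5 : t + (j + 1) = t + j + 1 := rfl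
      rw [h5]
      push_cast
      linarith
  have key : ∀ ε : ℝ, 0 < ε → ∀ t : ℕ,
      4 * R' * (Cp + 1) * (2 + ε) / ε ^ 2 + 1 ≤ (t : ℝ) → u t ≤ R + ε := by
    intro ε hε t ht
    by_contra hlt
    push_neg at hlt
    have hbnd0 : 0 ≤ 4 * R' * (Cp + 1) * (2 + ε) / ε ^ 2 := by positivity
    have ht1 : (1 : ℝ) ≤ (t : ℝ) := by linarith
    have htpos : (0 : ℝ) < (t : ℝ) := by linarith
    have ht1' : 1 ≤ t := by exact_mod_cast ht1
    -- S_t > (R+ε) t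
    have hS : (R + ε) * t < ∑ τ ∈ Icc 1 t, a τ := by
      have h := mul_lt_mul_of_pos_right hlt htpos
      have : u t * t = ∑ τ ∈ Icc 1 t, a τ := by
        rw [hu]
        field_simp
      linarith
    -- bound on sum of b
    have hB : ∑ τ ∈ Icc 1 t, b τ ≤ (t : ℝ) * R := by
      calc ∑ τ ∈ Icc 1 t, b τ ≤ ∑ _τ ∈ Icc 1 t, R := Finset.sum_le_sum fun τ _ => hbR τ
        _ = (t : ℝ) * R := by
          rw [Finset.sum_const, Nat.card_Icc]
          simp [nsmul_eq_mul]
    have hft : ε * t < f t := by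
      have h := htel t
      have h0 := hf0 0
      linarith
    set m : ℕ := ⌊ε * t / (2 * R')⌋₊ with hm
    have hm1 : (m : ℝ) * (2 * R') ≤ ε * t := by
      have h := Nat.floor_le (show (0:ℝ) ≤ ε * t / (2 * R') by positivity)
      rw [← hm] at h
      calc (m : ℝ) * (2 * R') ≤ (ε * t / (2 * R')) * (2 * R') :=
        mul_le_mul_of_nonneg_right h (by positivity)
        _ = ε * t := by field_simp
    have hm2 : ε * t < ((m : ℝ) + 1) * (2 * R') := by
      have h := Nat.lt_floor_add_one (ε * t / (2 * R'))
      rw [← hm] at h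
      have := mul_lt_mul_of_pos_right h (show (0:ℝ) < 2 * R' by positivity)
      calc ε * t = (ε * t / (2 * R')) * (2 * R') := by field_simp
        _ < ((m : ℝ) + 1) * (2 * R') := this
    -- f is at least εt/2 on [t, t+m]
    have hlow : ∀ j : ℕ, j ≤ m → ε * t / 2 ≤ f (t + j) := by
      intro j hj
      have h1 := hdec t j
      have hjm : (j : ℝ) * R' ≤ (m : ℝ) * R' :=
        mul_le_mul_of_nonneg_right (by exact_mod_cast hj) hR'0.le
      have : (m : ℝ) * R' ≤ ε * t / 2 := by linarith
      linarith
    set T : ℕ := t + m + 1 with hT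
    have hT1 : 1 ≤ T := by omega
    have hsumlow : ((m : ℝ) + 1) * (ε * t / 2) ≤ ∑ τ ∈ range T, f τ := by
      have hsub : Icc t (t + m) ⊆ range T := by
        intro x hx
        rw [Finset.mem_range]
        rw [Finset.mem_Icc] at hx
        omega
      have h1 : ∑ τ ∈ Icc t (t + m), f τ ≤ ∑ τ ∈ range T, f τ :=
        Finset.sum_le_sum_of_subset_of_nonneg hsub fun i _ _ => hf0 i
      have h2 : ((m : ℝ) + 1) * (ε * t / 2) ≤ ∑ τ ∈ Icc t (t + m), f τ := by
        have hcard : (Icc t (t + m)).card = m + 1 := by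
          rw [Nat.card_Icc]; omega
        calc ((m : ℝ) + 1) * (ε * t / 2) = (m + 1 : ℕ) • (ε * t / 2) := by
              rw [nsmul_eq_mul]; push_cast; ring
          _ = (Icc t (t + m)).card • (ε * t / 2) := by rw [hcard]
          _ ≤ ∑ τ ∈ Icc t (t + m), f τ := by
              apply Finset.card_nsmul_le_sum
              intro x hx
              rw [Finset.mem_Icc] at hx
              obtain ⟨h3, h4⟩ := hx
              obtain ⟨j, rfl⟩ := Nat.exists_eq_add_of_le h3
              exact hlow j (by omega)
      linarith
    have hsumhigh : ∑ τ ∈ range T, f τ ≤ Cp * T := by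
      have h := havg T hT1
      have hTpos : (0 : ℝ) < (T : ℝ) := by
        exact_mod_cast Nat.lt_of_lt_of_le Nat.zero_lt_one hT1
      have h2 := mul_le_mul_of_nonneg_right h hTpos.le
      have h3 : (1 / (T : ℝ)) * (∑ τ ∈ range T, f τ) * T = ∑ τ ∈ range T, f τ := by
        field_simp
      calc ∑ τ ∈ range T, f τ ≤ Cf * T := by rw [← h3]; linarith
        _ ≤ Cp * T := mul_le_mul_of_nonneg_right hCfCp hTpos.le
    have hTle : (T : ℝ) ≤ (t : ℝ) * (2 + ε) := by
      have hmle : (m : ℝ) ≤ ε * t / 2 := by nlinarith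
      have : (T : ℝ) = (t : ℝ) + m + 1 := by push_cast [hT]; ring
      nlinarith
    -- combine
    have hmain : ε * t * (ε * t / 2) < Cp * ((t : ℝ) * (2 + ε)) * (2 * R') := by
      have h1 : ε * t * (ε * t / 2) < ((m : ℝ) + 1) * (2 * R') * (ε * t / 2) :=
        mul_lt_mul_of_pos_right hm2 (by positivity)
      have h2 : ((m : ℝ) + 1) * (2 * R') * (ε * t / 2)
          = (((m : ℝ) + 1) * (ε * t / 2)) * (2 * R') := by ring
      have h3 : (((m : ℝ) + 1) * (ε * t / 2)) * (2 * R') ≤ (Cp * T) * (2 * R') := by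
        apply mul_le_mul_of_nonneg_right _ (by positivity)
        linarith
      have h4 : (Cp * T) * (2 * R') ≤ Cp * ((t : ℝ) * (2 + ε)) * (2 * R') := by
        apply mul_le_mul_of_nonneg_right _ (by positivity)
        exact mul_le_mul_of_nonneg_left hTle hCp0
      linarith
    -- derive contradiction with ht
    have hc2 : (ε ^ 2 * t) * t ≤ (4 * R' * Cp * (2 + ε)) * t := by nlinarith [hmain]
    have hcontra : ε ^ 2 * t ≤ 4 * R' * Cp * (2 + ε) :=
      le_of_mul_le_mul_right hc2 htpos
    have hε2 : (0 : ℝ) < ε ^ 2 := by positivity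
    have hub := mul_le_mul_of_nonneg_right ht hε2.le
    rw [add_mul, one_mul, div_mul_cancel₀ _ (ne_of_gt hε2)] at hub
    have hRe : 0 ≤ R' * ε := mul_nonneg hR'0.le hε.le
    clear hmain hc2 hsumlow hsumhigh hTle hlow hm1 hm2 hB hS hft htel hdec
      hlt hupos havg hrec hbR hb0 ha hf0 ht hbnd0 ht1 htpos ht1'
    linarith [hub, hcontra, hRe, hR'0, hε2]
  -- conclude
  have cobdd : IsCoboundedUnder (· ≤ ·) atTop u :=
    IsBoundedUnder.isCoboundedUnder_le ⟨0, Filter.eventually_map.2 (Eventually.of_forall fun t => hupos t)⟩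
  apply le_of_forall_pos_le_add
  intro ε hε
  apply Filter.limsup_le_of_le cobdd
  filter_upwards [Filter.eventually_ge_atTop
    (⌈4 * R' * (Cp + 1) * (2 + ε) / ε ^ 2 + 1⌉₊)] with t htt
  apply key ε hε t
  calc 4 * R' * (Cp + 1) * (2 + ε) / ε ^ 2 + 1
      ≤ (⌈4 * R' * (Cp + 1) * (2 + ε) / ε ^ 2 + 1⌉₊ : ℝ) := Nat.le_ceil _
    _ ≤ (t : ℝ) := by exact_mod_cast htt


/-- Necessary stability condition for the MQMS system: if strongly stable, then
for every α ∈ ℝ₊ᴺ, the time averaged expected weighted arrival rate is at most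
∑ₛ πₛ max_{I∈𝓘} α(Cₛ ⊛ I)1_Kᵀ. -/
theorem stmt_7 {Ω : Type*} [MeasureSpace Ω] [IsProbabilityMeasure (volume : Measure Ω)]
    (N K M : ℕ) (S : Type*) [Fintype S] [MeasurableSpace S]
    (Cmat : S → Matrix (Fin N) (Fin K) ℝ)
    (hC : ∀ s n k, Cmat s n k ∈ Set.Icc (0 : ℝ) (M : ℝ))
    (π : S → ℝ) (hπ : ∀ s, 0 ≤ π s) (hπ1 : ∑ s, π s = 1)
    (chan : ℕ → Ω → S)
    (hchanmeas : ∀ t, Measurable (chan t))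
    (hstat : ∀ t s, volume {ω | chan t ω = s} = ENNReal.ofReal (π s))
    (X A : ℕ → Ω → Fin N → ℝ) (H : ℕ → Ω → Fin N → Fin K → ℝ)
    (Ipol : ℕ → Ω → Matrix (Fin N) (Fin K) ℝ)
    (hIpol : ∀ t ω, Ipol t ω ∈ allocSet N K)
    (hXnonneg : ∀ t ω n, 0 ≤ X t ω n)
    (hAnonneg : ∀ t ω n, 0 ≤ A t ω n)
    (hHnonneg : ∀ t ω n k, 0 ≤ H t ω n k)
    (hHle : ∀ t ω n k, H t ω n k ≤ Cmat (chan t ω) n k * Ipol t ω n k)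
    (hevol : ∀ t : ℕ, 1 ≤ t → ∀ ω n,
      X t ω n = X (t - 1) ω n - (∑ k, H t ω n k) + A t ω n)
    (hintX : ∀ t n, Integrable (fun ω => X t ω n) volume)
    (hintA : ∀ t n, Integrable (fun ω => A t ω n) volume)
    (hintH : ∀ t n k, Integrable (fun ω => H t ω n k) volume)
    (Amax : ℝ) (hA2 : ∀ t n, ∫ ω, (A t ω n) ^ 2 ∂volume ≤ Amax ^ 2)
    (hstable : ∀ n, ∃ Cb : ℝ, ∀ t : ℕ, 1 ≤ t →
      (1 / (t : ℝ)) * ∑ τ ∈ range t, ∫ ω, X τ ω n ∂volume ≤ Cb)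
    (α : Fin N → ℝ) (hα : ∀ n, 0 ≤ α n) :
    limsup (fun t : ℕ => (1 / (t : ℝ)) *
        ∑ τ ∈ Icc 1 t, ∑ n, α n * ∫ ω, A τ ω n ∂volume) atTop ≤
      ∑ s, π s * serviceMax α (Cmat s) := by
  classical
  choose Cb hCb using hstable
  set R : ℝ := ∑ s, π s * serviceMax α (Cmat s) with hRdef
  have hR : 0 ≤ R :=
    Finset.sum_nonneg fun s _ => mul_nonneg (hπ s) (serviceMax_nonneg α _)
  have hf0 : ∀ t, 0 ≤ ∑ n, α n * ∫ ω, X t ω n := fun t =>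
    Finset.sum_nonneg fun n _ =>
      mul_nonneg (hα n) (integral_nonneg fun ω => hXnonneg t ω n)
  have ha0 : ∀ t, 0 ≤ ∑ n, α n * ∫ ω, A t ω n := fun t =>
    Finset.sum_nonneg fun n _ =>
      mul_nonneg (hα n) (integral_nonneg fun ω => hAnonneg t ω n)
  have hb0 : ∀ t, 0 ≤ ∑ n, α n * ∫ ω, (∑ k, H t ω n k) := fun t =>
    Finset.sum_nonneg fun n _ => mul_nonneg (hα n)
      (integral_nonneg fun ω => Finset.sum_nonneg fun k _ => hHnonneg t ω n k)
  -- b t ≤ R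
  have hbR : ∀ t, ∑ n, α n * ∫ ω, (∑ k, H t ω n k) ≤ R := by
    intro t
    have hFint : Integrable (fun ω => ∑ n, α n * ∑ k, H t ω n k) volume :=
      integrable_finset_sum _ fun n _ =>
        ((integrable_finset_sum _ fun k _ => hintH t n k).const_mul (α n))
    have hbeq : ∑ n, α n * ∫ ω, (∑ k, H t ω n k)
        = ∫ ω, ∑ n, α n * ∑ k, H t ω n k := by
      rw [integral_finset_sum _ fun n _ =>
        ((integrable_finset_sum _ fun k _ => hintH t n k).const_mul (α n))]
      refine Finset.sum_congr rfl fun n _ => ?_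
      rw [integral_const_mul]
    have hFg : ∀ ω, (∑ n, α n * ∑ k, H t ω n k) ≤ serviceMax α (Cmat (chan t ω)) := by
      intro ω
      calc ∑ n, α n * ∑ k, H t ω n k
          ≤ ∑ n, α n * ∑ k, Cmat (chan t ω) n k * Ipol t ω n k :=
            Finset.sum_le_sum fun n _ => mul_le_mul_of_nonneg_left
              (Finset.sum_le_sum fun k _ => hHle t ω n k) (hα n)
        _ = weightedRate α (Cmat (chan t ω)) (Ipol t ω) := by
            simp only [weightedRate, Finset.mul_sum]
            rw [Finset.sum_comm]
        _ ≤ serviceMax α (Cmat (chan t ω)) :=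
            le_serviceMax α _ _ (hIpol t ω)
    rw [hbeq, hRdef]
    exact partition_integral_le (chan t) π hπ hπ1 (hstat t)
      (fun s => serviceMax α (Cmat s)) _ hFint hFg
  -- recursion
  have hrec : ∀ τ : ℕ, (∑ n, α n * ∫ ω, A (τ + 1) ω n)
      = (∑ n, α n * ∫ ω, X (τ + 1) ω n) - (∑ n, α n * ∫ ω, X τ ω n)
        + ∑ n, α n * ∫ ω, (∑ k, H (τ + 1) ω n k) := by
    intro τ
    have hint : ∀ n, ∫ ω, A (τ + 1) ω n
        = (∫ ω, X (τ + 1) ω n) - (∫ ω, X τ ω n) + ∫ ω, (∑ k, H (τ + 1) ω n k) := by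
      intro n
      have hAeq : (fun ω => A (τ + 1) ω n)
          = fun ω => (X (τ + 1) ω n - X τ ω n) + ∑ k, H (τ + 1) ω n k := by
        funext ω
        have h := hevol (τ + 1) (Nat.succ_le_succ (Nat.zero_le τ)) ω n
        simp only [Nat.add_sub_cancel] at h
        linarith
      rw [hAeq]
      have h1 : Integrable (fun ω => X (τ + 1) ω n - X τ ω n) volume :=
        (hintX _ n).sub (hintX τ n)
      have h2 : Integrable (fun ω => ∑ k, H (τ + 1) ω n k) volume :=
        integrable_finset_sum _ fun k _ => hintH _ n k
      calc ∫ ω, ((X (τ + 1) ω n - X τ ω n) + ∑ k, H (τ + 1) ω n k)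
          = (∫ ω, (X (τ + 1) ω n - X τ ω n)) + ∫ ω, (∑ k, H (τ + 1) ω n k) :=
            integral_add h1 h2
        _ = ((∫ ω, X (τ + 1) ω n) - ∫ ω, X τ ω n) + ∫ ω, (∑ k, H (τ + 1) ω n k) := by
            rw [integral_sub (hintX _ n) (hintX τ n)]
    simp only [hint, mul_add, mul_sub, Finset.sum_add_distrib, Finset.sum_sub_distrib]
  -- average bound
  have havg : ∀ t : ℕ, 1 ≤ t →
      (1 / (t : ℝ)) * ∑ τ ∈ range t, ∑ n, α n * ∫ ω, X τ ω n
        ≤ ∑ n, α n * Cb n := by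
    intro t ht
    rw [Finset.sum_comm, Finset.mul_sum]
    refine Finset.sum_le_sum fun n _ => ?_
    have h := hCb n t ht
    rw [← Finset.mul_sum]
    calc (1 / (t : ℝ)) * (α n * ∑ τ ∈ range t, ∫ ω, X τ ω n)
        = α n * ((1 / (t : ℝ)) * ∑ τ ∈ range t, ∫ ω, X τ ω n) := by ring
      _ ≤ α n * Cb n := mul_le_mul_of_nonneg_left h (hα n)
  exact seq_limsup_le (fun t => ∑ n, α n * ∫ ω, X t ω n)
    (fun t => ∑ n, α n * ∫ ω, A t ω n)
    (fun t => ∑ n, α n * ∫ ω, (∑ k, H t ω n k))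
    R (∑ n, α n * Cb n) hR hf0 ha0 hb0 hbR hrec havg
end

section
/- The valid inequality α·xᵀ ≤ ∑_{s∈S} π_s max_{I∈𝓘} α·(C_s ⊛ I)·1_Kᵀ holds for every point x of the polytope 𝓟 = conv.hull{R^{(g)} : g ∈ 𝓖} and every α ∈ ℝ₊^N. -/
open Finset

/-- Average rate vector of a deterministic policy g. -/
def rateOf {N K : ℕ} {S : Type*} [Fintype S] (π : S → ℝ)
    (Cmat : S → Matrix (Fin N) (Fin K) ℝ)
    (g : S → Matrix (Fin N) (Fin K) ℝ) : Fin N → ℝ :=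
  fun n => ∑ s, π s * ∑ k, Cmat s n k * g s n k

/-- Validity: for every α ∈ ℝ₊ᴺ and every x in the achievable rate polytope 𝓟,
α·xᵀ ≤ ∑ₛ πₛ max_{I∈𝓘} α(Cₛ ⊛ I)1_Kᵀ. -/
theorem stmt_12 (N K : ℕ) (S : Type*) [Fintype S]
    (Cmat : S → Matrix (Fin N) (Fin K) ℝ) (hC : ∀ s n k, 0 ≤ Cmat s n k)
    (π : S → ℝ) (hπ : ∀ s, 0 ≤ π s) (hπ1 : ∑ s, π s = 1)
    (α : Fin N → ℝ) (hα : ∀ n, 0 ≤ α n)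
    (x : Fin N → ℝ)
    (hx : x ∈ convexHull ℝ {r : Fin N → ℝ |
        ∃ g : S → Matrix (Fin N) (Fin K) ℝ,
          (∀ s, g s ∈ allocSet N K) ∧ r = rateOf π Cmat g}) :
    ∑ n, α n * x n ≤ ∑ s, π s * serviceMax α (Cmat s) := by
  -- halfspace argument
  set B := ∑ s, π s * serviceMax α (Cmat s) with hB
  have hconv : Convex ℝ {w : Fin N → ℝ | ∑ n, α n * w n ≤ B} := by
    apply convex_halfSpace_le
    constructor
    · intro a b; simp [mul_add, Finset.sum_add_distrib]
    · intro c a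
      simp only [Pi.smul_apply, smul_eq_mul, Finset.mul_sum]
      congr 1; ext n; ring
  have hsub : {r : Fin N → ℝ |
        ∃ g : S → Matrix (Fin N) (Fin K) ℝ,
          (∀ s, g s ∈ allocSet N K) ∧ r = rateOf π Cmat g} ⊆
      {w : Fin N → ℝ | ∑ n, α n * w n ≤ B} := by
    rintro r ⟨g, hg, rfl⟩
    have key : ∑ n, α n * rateOf π Cmat g n
        = ∑ s, π s * weightedRate α (Cmat s) (g s) := by
      unfold rateOf weightedRate
      simp only [Finset.mul_sum]
      rw [Finset.sum_comm]
      congr 1; ext s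
      rw [Finset.sum_comm]
      congr 1; ext k
      congr 1; ext n; ring
    rw [Set.mem_setOf_eq, key]
    apply Finset.sum_le_sum
    intro s _
    apply mul_le_mul_of_nonneg_left _ (hπ s)
    -- weightedRate ≤ serviceMax
    apply le_csSup
    · refine ⟨∑ k, ∑ n, α n * Cmat s n k, ?_⟩
      rintro y ⟨I, ⟨hI01, _⟩, rfl⟩
      apply Finset.sum_le_sum; intro k _
      apply Finset.sum_le_sum; intro n _
      have hle : I n k ≤ 1 := by rcases hI01 n k with h | h <;> simp [h]
      have h0 : 0 ≤ I n k := by rcases hI01 n k with h | h <;> simp [h]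
      calc α n * (Cmat s n k * I n k) ≤ α n * (Cmat s n k * 1) := by
            apply mul_le_mul_of_nonneg_left _ (hα n)
            exact mul_le_mul_of_nonneg_left hle (hC s n k)
        _ = α n * Cmat s n k := by ring
    · exact ⟨g s, hg s, rfl⟩
  exact convexHull_min hsub hconv hx
end

section
/- Two-queue single-server ON-OFF stability region: with K = 1 server and independent Bernoulli connectivities with parameters p_1 and p_2 for queues 1 and 2, the achievable rate polytope equals {(λ_1, λ_2) ∈ ℝ₊² : λ_1 ≤ p_1, λ_2 ≤ p_2, λ_1 + λ_2 ≤ p_1 + p_2 − p_1 p_2}. -/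
open Finset

/-- Probability of channel state s = (connectivity of queue 1, of queue 2) under
independent Bernoulli connectivities. -/
def statProb (p1 p2 : ℝ) (s : Bool × Bool) : ℝ :=
  (if s.1 then p1 else 1 - p1) * (if s.2 then p2 else 1 - p2)

/-- Whether queue n is connected in state s. -/
def conn (s : Bool × Bool) (n : Fin 2) : Bool := if n = 0 then s.1 else s.2

/-- Average rate vector of a deterministic policy g (g s = some n means the
server is allocated to queue n in state s; it serves one packet if connected). -/
def rate13 (p1 p2 : ℝ) (g : Bool × Bool → Option (Fin 2)) : Fin 2 → ℝ :=
  fun n => ∑ s : Bool × Bool,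
    statProb p1 p2 s * (if g s = some n ∧ conn s n then 1 else 0)

private lemma seg_mem {K : Set (Fin 2 → ℝ)} (hK : Convex ℝ K) {P Q R : Fin 2 → ℝ}
    (hP : P ∈ K) (hQ : Q ∈ K) (t : ℝ) (h0 : 0 ≤ t) (h1 : t ≤ 1)
    (hR : R = (1 - t) • P + t • Q) : R ∈ K := by
  subst hR
  exact hK hP hQ (by linarith) h0 (by ring)

private lemma ind_bounds (o : Option (Fin 2)) :
    (0:ℝ) ≤ (if o = some 0 then (1:ℝ) else 0) ∧ (if o = some 0 then (1:ℝ) else 0) ≤ 1 ∧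
    (0:ℝ) ≤ (if o = some 1 then (1:ℝ) else 0) ∧ (if o = some 1 then (1:ℝ) else 0) ≤ 1 ∧
    (if o = some 0 then (1:ℝ) else 0) + (if o = some 1 then (1:ℝ) else 0) ≤ 1 := by
  rcases o with _ | n
  · simp
  · fin_cases n <;> simp

/-- Geometric core: any point of the polytope is in any convex set containing
the five extreme points. -/
private lemma mem_hull {K : Set (Fin 2 → ℝ)} (hK : Convex ℝ K)
    (p1 p2 x y : ℝ) (hp10 : 0 ≤ p1) (hp11 : p1 ≤ 1) (hp20 : 0 ≤ p2) (hp21 : p2 ≤ 1)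
    (hO : (fun _ => (0:ℝ)) ∈ K) (hA : ![p1, 0] ∈ K) (hB : ![0, p2] ∈ K)
    (hC : ![p1, (1-p1)*p2] ∈ K) (hD : ![p1*(1-p2), p2] ∈ K)
    (hx0 : 0 ≤ x) (hy0 : 0 ≤ y) (hxp : x ≤ p1) (hyp : y ≤ p2)
    (hsum : x + y ≤ p1 + p2 - p1 * p2) : ![x, y] ∈ K := by
  -- bottom point (x, 0)
  have hP1 : ![x, (0:ℝ)] ∈ K := by
    rcases eq_or_lt_of_le hp10 with h | h
    · have hx : x = 0 := le_antisymm (by linarith) hx0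
      refine seg_mem hK hO hA 0 le_rfl zero_le_one ?_
      funext n; fin_cases n <;> simp [hx]
    · have hne : p1 ≠ 0 := ne_of_gt h
      refine seg_mem hK hO hA (x / p1) (div_nonneg hx0 h.le)
        ((div_le_one h).mpr hxp) ?_
      funext n; fin_cases n <;> simp <;> field_simp
  rcases le_or_gt x (p1 * (1 - p2)) with hcase | hcase
  · -- top point (x, p2) on segment B--D
    have hP2 : ![x, p2] ∈ K := by
      rcases eq_or_lt_of_le (mul_nonneg hp10 (by linarith : (0:ℝ) ≤ 1 - p2)) with h | h
      · have hx : x = 0 := le_antisymm (by linarith [h ▸ hcase]) hx0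
        refine seg_mem hK hB hD 0 le_rfl zero_le_one ?_
        funext n; fin_cases n <;> simp [hx]
      · have hne : p1 * (1 - p2) ≠ 0 := ne_of_gt h
        refine seg_mem hK hB hD (x / (p1 * (1-p2))) (div_nonneg hx0 h.le)
          ((div_le_one h).mpr hcase) ?_
        have hne' : p1 - p1 * p2 ≠ 0 := by rw [show p1 - p1 * p2 = p1 * (1 - p2) by ring]; exact hne
        funext n; fin_cases n
        · simp <;> field_simp <;> linear_combination (-x) * mul_inv_cancel₀ hne'
        · simp <;> field_simp <;> ring
    rcases eq_or_lt_of_le hp20 with h | h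
    · have hy' : y = 0 := le_antisymm (by linarith) hy0
      rw [show y = 0 from hy']; exact hP1
    · have hne : p2 ≠ 0 := ne_of_gt h
      refine seg_mem hK hP1 hP2 (y / p2) (div_nonneg hy0 h.le)
        ((div_le_one h).mpr hyp) ?_
      funext n; fin_cases n <;> simp <;> field_simp <;> ring
  · -- top point (x, T - x) on segment D--C
    have hden : 0 < p1 * p2 := by nlinarith
    have hdne : p1 * p2 ≠ 0 := ne_of_gt hden
    have hP2 : ![x, p1 + p2 - p1*p2 - x] ∈ K := by
      refine seg_mem hK hD hC ((x - p1*(1-p2)) / (p1*p2))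
        (div_nonneg (by linarith) hden.le)
        ((div_le_one hden).mpr (by nlinarith)) ?_
      have hp1ne : p1 ≠ 0 := left_ne_zero_of_mul hdne
      have hp2ne : p2 ≠ 0 := right_ne_zero_of_mul hdne
      funext n; fin_cases n <;> simp <;> field_simp <;> ring
    have hymax : y ≤ p1 + p2 - p1*p2 - x := by linarith
    rcases eq_or_lt_of_le (by linarith : (0:ℝ) ≤ p1 + p2 - p1*p2 - x) with h | h
    · have hy' : y = 0 := le_antisymm (by linarith) hy0
      rw [show y = 0 from hy']; exact hP1
    · have hne : p1 + p2 - p1*p2 - x ≠ 0 := ne_of_gt h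
      refine seg_mem hK hP1 hP2 (y / (p1 + p2 - p1*p2 - x)) (div_nonneg hy0 h.le)
        ((div_le_one h).mpr hymax) ?_
      funext n; fin_cases n <;> simp <;> field_simp <;> ring

/-- Two-queue single-server ON-OFF system: the achievable rate polytope equals
{(λ₁,λ₂) ≥ 0 : λ₁ ≤ p₁, λ₂ ≤ p₂, λ₁ + λ₂ ≤ p₁ + p₂ − p₁p₂}. -/
theorem stmt_13 (p1 p2 : ℝ) (hp1 : p1 ∈ Set.Icc (0:ℝ) 1) (hp2 : p2 ∈ Set.Icc (0:ℝ) 1) :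
    convexHull ℝ {r : Fin 2 → ℝ |
        ∃ g : Bool × Bool → Option (Fin 2), r = rate13 p1 p2 g} =
      {lam : Fin 2 → ℝ | 0 ≤ lam 0 ∧ 0 ≤ lam 1 ∧ lam 0 ≤ p1 ∧ lam 1 ≤ p2 ∧
        lam 0 + lam 1 ≤ p1 + p2 - p1 * p2} := by
  obtain ⟨hp10, hp11⟩ := hp1
  obtain ⟨hp20, hp21⟩ := hp2
  set S : Set (Fin 2 → ℝ) :=
    {r : Fin 2 → ℝ | ∃ g : Bool × Bool → Option (Fin 2), r = rate13 p1 p2 g} with hS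
  apply le_antisymm
  · -- convexHull S ⊆ polytope
    apply convexHull_min
    · rintro r ⟨g, rfl⟩
      have e0 : rate13 p1 p2 g 0 = p1*p2 * (if g (true,true) = some 0 then 1 else 0)
          + p1*(1-p2) * (if g (true,false) = some 0 then 1 else 0) := by
        simp [rate13, statProb, conn, Fintype.sum_prod_type]
      have e1 : rate13 p1 p2 g 1 = p1*p2 * (if g (true,true) = some 1 then 1 else 0)
          + (1-p1)*p2 * (if g (false,true) = some 1 then 1 else 0) := by
        simp [rate13, statProb, conn, Fintype.sum_prod_type]
      obtain ⟨ha0, ha1, hc0, hc1, hac⟩ := ind_bounds (g (true,true))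
      obtain ⟨hb0, hb1, -, -, -⟩ := ind_bounds (g (true,false))
      obtain ⟨-, -, hd0, hd1, -⟩ := ind_bounds (g (false,true))
      simp only [Set.mem_setOf_eq, e0, e1]
      clear e0 e1
      generalize (if g (true,true) = some 0 then (1:ℝ) else 0) = a at ha0 ha1 hac ⊢
      generalize (if g (true,false) = some 0 then (1:ℝ) else 0) = b at hb0 hb1 ⊢
      generalize (if g (true,true) = some 1 then (1:ℝ) else 0) = c at hc0 hc1 hac ⊢
      generalize (if g (false,true) = some 1 then (1:ℝ) else 0) = d at hd0 hd1 ⊢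
      have q1 : (0:ℝ) ≤ p1 * p2 := mul_nonneg hp10 hp20
      have q2 : (0:ℝ) ≤ p1 * (1-p2) := mul_nonneg hp10 (by linarith)
      have q3 : (0:ℝ) ≤ (1-p1) * p2 := mul_nonneg (by linarith) hp20
      refine ⟨?_, ?_, ?_, ?_, ?_⟩ <;> nlinarith [mul_nonneg q1 ha0, mul_nonneg q2 hb0,
        mul_nonneg q1 hc0, mul_nonneg q3 hd0, mul_nonneg q1 (by linarith : (0:ℝ) ≤ 1 - a),
        mul_nonneg q2 (by linarith : (0:ℝ) ≤ 1 - b), mul_nonneg q1 (by linarith : (0:ℝ) ≤ 1 - c),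
        mul_nonneg q3 (by linarith : (0:ℝ) ≤ 1 - d), mul_nonneg q1 (by linarith : (0:ℝ) ≤ 1 - a - c)]
    · -- polytope is convex
      intro f hf g hg α β ha hb hab
      simp only [Set.mem_setOf_eq, Pi.add_apply, Pi.smul_apply, smul_eq_mul] at *
      obtain ⟨h1, h2, h3, h4, h5⟩ := hf
      obtain ⟨k1, k2, k3, k4, k5⟩ := hg
      refine ⟨by nlinarith, by nlinarith, by nlinarith, by nlinarith, by nlinarith⟩
  · -- polytope ⊆ convexHull S
    intro lam hlam
    obtain ⟨hx0, hy0, hxp, hyp, hsum⟩ := hlam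
    have hK : Convex ℝ (convexHull ℝ S) := convex_convexHull ℝ S
    have hO : (fun _ => (0:ℝ)) ∈ convexHull ℝ S :=
      subset_convexHull ℝ S ⟨fun _ => none, by funext n; simp [rate13]⟩
    have hA : ![p1, 0] ∈ convexHull ℝ S := by
      apply subset_convexHull
      refine ⟨fun _ => some 0, ?_⟩
      funext n
      fin_cases n <;> simp [rate13, statProb, conn, Fintype.sum_prod_type] <;> ring
    have hB : ![0, p2] ∈ convexHull ℝ S := by
      apply subset_convexHull
      refine ⟨fun _ => some 1, ?_⟩
      funext n
      fin_cases n <;> simp [rate13, statProb, conn, Fintype.sum_prod_type] <;> ring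
    have hC : ![p1, (1-p1)*p2] ∈ convexHull ℝ S := by
      apply subset_convexHull
      refine ⟨fun s => if s.1 then some 0 else some 1, ?_⟩
      funext n
      fin_cases n <;> simp [rate13, statProb, conn, Fintype.sum_prod_type] <;> ring
    have hD : ![p1*(1-p2), p2] ∈ convexHull ℝ S := by
      apply subset_convexHull
      refine ⟨fun s => if s.2 then some 1 else some 0, ?_⟩
      funext n
      fin_cases n <;> simp [rate13, statProb, conn, Fintype.sum_prod_type] <;> ring
    have hrep : lam = ![lam 0, lam 1] := by
      funext n; fin_cases n <;> rfl
    rw [hrep]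
    exact mem_hull hK p1 p2 (lam 0) (lam 1) hp10 hp11 hp20 hp21
      hO hA hB hC hD hx0 hy0 hxp hyp hsum
end

section
/- Bernoulli ON-OFF MQMS necessary condition: for independent ON-OFF channels with E[C_{n,k}(t)] = p_{n,k}, and any subset Q ⊆ {1,...,N}, the maximum expected number of packets served per slot to queues in Q is K − ∑_{k=1}^K ∏_{n∈Q} (1 − p_{n,k}); that is, ∑_{s∈S} π_s · max_{I∈𝓘} (1_Q)·(C_s ⊛ I)·1_Kᵀ = K − ∑_{k=1}^K ∏_{n∈Q}(1 − p_{n,k}), where 1_Q is the indicator vector of Q. -/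
open Finset

lemma serviceMax_indicator {N K : ℕ} (Q : Finset (Fin N)) (c : Matrix (Fin N) (Fin K) Bool) :
    serviceMax (fun n => if n ∈ Q then (1:ℝ) else 0)
      (fun n k => if c n k then (1:ℝ) else 0)
      = ∑ k, (if ∃ n ∈ Q, c n k = true then (1:ℝ) else 0) := by
  classical
  set α : Fin N → ℝ := fun n => if n ∈ Q then (1:ℝ) else 0 with hα
  set C : Matrix (Fin N) (Fin K) ℝ := fun n k => if c n k then (1:ℝ) else 0 with hC
  apply IsGreatest.csSup_eq
  constructor
  · -- membership: construct the optimal I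
    set I : Matrix (Fin N) (Fin K) ℝ := fun n k =>
      if h : ∃ m ∈ Q, c m k = true then (if n = h.choose then 1 else 0) else 0 with hI
    refine ⟨I, ⟨?_, ?_⟩, ?_⟩
    · intro n k
      by_cases h : ∃ m ∈ Q, c m k = true <;> simp [hI, h] <;> tauto
    · intro k
      by_cases h : ∃ m ∈ Q, c m k = true
      · simp [hI, h]
      · simp [hI, h]
    · unfold weightedRate
      refine Finset.sum_congr rfl fun k _ => ?_
      by_cases h : ∃ m ∈ Q, c m k = true
      · obtain ⟨hmem, hc⟩ := h.choose_spec
        rw [if_pos h, Finset.sum_eq_single h.choose]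
        · simp [hI, hα, hC, h, hmem, hc]
        · intro n _ hn
          simp [hI, h, hn]
        · simp
      · rw [if_neg h]
        apply (Finset.sum_eq_zero fun n _ => ?_).symm
        simp [hI, h]
  · -- upper bound
    rintro x ⟨I, ⟨hI01, hIcol⟩, rfl⟩
    unfold weightedRate
    refine Finset.sum_le_sum fun k _ => ?_
    by_cases h : ∃ m ∈ Q, c m k = true
    · rw [if_pos h]
      calc ∑ n, α n * (C n k * I n k) ≤ ∑ n, I n k := by
            refine Finset.sum_le_sum fun n _ => ?_
            rcases hI01 n k with h0 | h1
            · simp [h0]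
            · by_cases hq : n ∈ Q <;> by_cases hcnk : c n k <;>
                simp [hα, hC, hq, hcnk, h1]
        _ ≤ 1 := hIcol k
    · rw [if_neg h]
      apply le_of_eq
      apply Finset.sum_eq_zero fun n _ => ?_
      by_cases hq : n ∈ Q
      · have : c n k = false := by
          by_contra hcnk
          exact h ⟨n, hq, by simpa using hcnk⟩
        simp [hα, hC, this]
      · simp [hα, hq]

lemma sum_factor {N K : ℕ} (g : Fin N → Fin K → Bool → ℝ) :
    ∑ c : Matrix (Fin N) (Fin K) Bool, ∏ n, ∏ k, g n k (c n k)
      = ∏ n, ∏ k, (g n k true + g n k false) := by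
  have h1 : ∀ n : Fin N, ∑ x : Fin K → Bool, ∏ k, g n k (x k)
      = ∏ k, (g n k true + g n k false) := by
    intro n
    rw [← Fintype.prod_sum (fun k (b : Bool) => g n k b)]
    exact Finset.prod_congr rfl fun k _ => by rw [Fintype.sum_bool]
  have h2 := Fintype.prod_sum (κ := fun _ : Fin N => Fin K → Bool)
    (fun n x => ∏ k, g n k (x k))
  calc ∑ c : Matrix (Fin N) (Fin K) Bool, ∏ n, ∏ k, g n k (c n k)
      = ∏ n, ∑ x : Fin K → Bool, ∏ k, g n k (x k) := h2.symm
    _ = ∏ n, ∏ k, (g n k true + g n k false) := Finset.prod_congr rfl fun n _ => h1 n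

/-- Bernoulli ON-OFF MQMS: for independent ON-OFF channels with
E[C_{n,k}] = p_{n,k} and any subset Q of queues,
∑ₛ πₛ max_{I∈𝓘} 1_Q (Cₛ ⊛ I)1_Kᵀ = K − ∑ₖ ∏_{n∈Q} (1 − p_{n,k}). -/
theorem stmt_14 (N K : ℕ) (p : Fin N → Fin K → ℝ)
    (hp : ∀ n k, p n k ∈ Set.Icc (0:ℝ) 1) (Q : Finset (Fin N)) :
    ∑ c : Matrix (Fin N) (Fin K) Bool,
        (∏ n, ∏ k, (if c n k then p n k else 1 - p n k)) *
          serviceMax (fun n => if n ∈ Q then (1:ℝ) else 0)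
            (fun n k => if c n k then (1:ℝ) else 0) =
      (K : ℝ) - ∑ k, ∏ n ∈ Q, (1 - p n k) := by
  classical
  simp only [serviceMax_indicator Q]
  simp_rw [Finset.mul_sum]
  rw [Finset.sum_comm]
  have hK : (K : ℝ) - ∑ k, ∏ n ∈ Q, (1 - p n k)
      = ∑ k : Fin K, (1 - ∏ n ∈ Q, (1 - p n k)) := by
    rw [Finset.sum_sub_distrib]
    simp
  rw [hK]
  refine Finset.sum_congr rfl fun k _ => ?_
  have htotal : ∑ c : Matrix (Fin N) (Fin K) Bool,
      (∏ n, ∏ m, (if c n m then p n m else 1 - p n m)) = 1 := by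
    rw [sum_factor (fun n m b => if b then p n m else 1 - p n m)]
    simp
  have hmiss : ∑ c : Matrix (Fin N) (Fin K) Bool,
      (∏ n, ∏ m, (if c n m then p n m else 1 - p n m)) *
        (if ∃ n ∈ Q, c n k = true then (0:ℝ) else 1)
      = ∏ n ∈ Q, (1 - p n k) := by
    have key : ∀ c : Matrix (Fin N) (Fin K) Bool,
        (∏ n, ∏ m, (if c n m then p n m else 1 - p n m)) *
          (if ∃ n ∈ Q, c n k = true then (0:ℝ) else 1)
        = ∏ n, ∏ m, ((if c n m then p n m else 1 - p n m) *
            (if n ∈ Q ∧ m = k ∧ c n m = true then (0:ℝ) else 1)) := by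
      intro c
      rw [Finset.prod_congr rfl fun n _ => Finset.prod_mul_distrib,
        Finset.prod_mul_distrib]
      congr 1
      by_cases h : ∃ n ∈ Q, c n k = true
      · obtain ⟨n₀, hn₀, hc₀⟩ := h
        rw [if_pos ⟨n₀, hn₀, hc₀⟩]
        refine (Finset.prod_eq_zero (Finset.mem_univ n₀) ?_).symm
        exact Finset.prod_eq_zero (Finset.mem_univ k) (by simp [hn₀, hc₀])
      · rw [if_neg h]
        refine (Finset.prod_eq_one fun n _ => Finset.prod_eq_one fun m _ => ?_).symm
        rw [if_neg]
        rintro ⟨hq, rfl, hc⟩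
        exact h ⟨n, hq, hc⟩
    simp_rw [key]
    rw [sum_factor (fun n m b => (if b then p n m else 1 - p n m) *
      (if n ∈ Q ∧ m = k ∧ b = true then (0:ℝ) else 1))]
    have : ∀ n : Fin N, ∀ m : Fin K,
        (p n m * (if n ∈ Q ∧ m = k then (0:ℝ) else 1) + (1 - p n m))
        = if n ∈ Q ∧ m = k then 1 - p n m else 1 := by
      intro n m
      by_cases h : n ∈ Q ∧ m = k <;> simp [h] <;> ring
    trans (∏ n : Fin N, ∏ m : Fin K, (if n ∈ Q ∧ m = k then (1 - p n m) else 1))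
    · refine Finset.prod_congr rfl fun n _ => Finset.prod_congr rfl fun m _ => ?_
      by_cases hq : n ∈ Q <;> by_cases hm : m = k <;> simp [hq, hm]
    trans (∏ n : Fin N, (if n ∈ Q then (1 - p n k) else 1))
    · refine Finset.prod_congr rfl fun n _ => ?_
      by_cases hq : n ∈ Q
      · simp only [hq, true_and]
        exact (Finset.prod_eq_single k (fun m _ hm => by simp [hm]) (by simp)).trans
          (by simp)
      · simp [hq]
    · rw [Finset.prod_ite_mem, Finset.univ_inter]
  -- finish the per-column computation
  have hsplit : ∀ c : Matrix (Fin N) (Fin K) Bool,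
      (if ∃ n ∈ Q, c n k = true then (1:ℝ) else 0)
      = 1 - (if ∃ n ∈ Q, c n k = true then (0:ℝ) else 1) := by
    intro c; by_cases h : ∃ n ∈ Q, c n k = true <;> simp [h]
  simp_rw [hsplit, mul_sub, mul_one]
  rw [Finset.sum_sub_distrib, htotal, hmiss]
end
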